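/- Let S = {(v,w) ∈ ℕ² : v² + w² ≤ 16} index the degree-4 Euclidean order basis (17 modes) on the reference quadrilateral. Let M be the diagonal real S×S matrix with M_{(v,w),(v,w)} = 4/((2v+1)(2w+1)). For real parameters q0, q1, q2, q3, let Q be the symmetric S×S matrix whose only nonzero entries (listing one entry of each symmetric pair) are Q_{(0,4),(0,4)} = Q_{(4,0),(4,0)} = q0, Q_{(0,4),(4,0)} = q3, Q_{(1,2),(3,2)} = −5·q2/3, Q_{(1,3),(3,1)} = 25·q2/9, Q_{(2,1),(2,3)} = −5·q2/3, Q_{(2,2),(2,2)} = q2, and Q_{(2,3),(2,3)} = Q_{(3,2),(3,2)} = q1. Then M + Q is positive definite if and only if the following five conditions all hold: q0 > −4/9; q2 > −4/25; 420·q1 + 48 − 4375·q2² > 0; 144 − 30625·q2² > 0; and 9·q0·(9·q0 + 8) − 81·q3² + 16 > 0. -/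

import Mathlib

/-!
The filter `Q` couples only the four mode pairs `{(0,4),(4,0)}`, `{(1,2),(3,2)}`,
`{(2,1),(2,3)}`, `{(1,3),(3,1)}`, and `M` is diagonal, so after a permutation `M + Q` is block
diagonal with `1 × 1` and `2 × 2` blocks. Such a symmetric matrix is positive definite iff its
diagonal is positive and each `2 × 2` block has positive determinant; the five conditions are these
determinants and diagonal entries with denominators cleared.
-/

/-- The index set of the degree-4 Euclidean order basis (17 modes):
modes `(v,w)` with `v² + w² ≤ 16`. -/
def EO4 : Type := {p : Fin 5 × Fin 5 // (p.1 : ℕ) ^ 2 + (p.2 : ℕ) ^ 2 ≤ 16}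

instance : Fintype EO4 := Subtype.fintype _
instance : DecidableEq EO4 := Subtype.instDecidableEq

/-- Modal mass matrix of the degree-4 Euclidean order Legendre basis:
`M_{(v,w),(v,w)} = 4/((2v+1)(2w+1))`. -/
noncomputable def massEO4 : Matrix EO4 EO4 ℝ :=
  Matrix.diagonal fun p =>
    (4 : ℝ) / (((2 * (p.val.1 : ℕ) + 1) * (2 * (p.val.2 : ℕ) + 1) : ℕ) : ℝ)

/-- The symmetric filter matrix `Q(q0, q1, q2, q3)` for the degree-4 Euclidean order
basis. -/
noncomputable def filterEO4 (q0 q1 q2 q3 : ℝ) : Matrix EO4 EO4 ℝ :=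
  fun i j =>
    if (i.val = (0, 4) ∧ j.val = (0, 4)) ∨ (i.val = (4, 0) ∧ j.val = (4, 0)) then q0
    else if (i.val = (0, 4) ∧ j.val = (4, 0)) ∨ (i.val = (4, 0) ∧ j.val = (0, 4)) then q3
    else if (i.val = (1, 2) ∧ j.val = (3, 2)) ∨ (i.val = (3, 2) ∧ j.val = (1, 2)) ∨
            (i.val = (2, 1) ∧ j.val = (2, 3)) ∨ (i.val = (2, 3) ∧ j.val = (2, 1)) then
      -5 * q2 / 3
    else if (i.val = (1, 3) ∧ j.val = (3, 1)) ∨ (i.val = (3, 1) ∧ j.val = (1, 3)) then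
      25 * q2 / 9
    else if i.val = (2, 2) ∧ j.val = (2, 2) then q2
    else if (i.val = (2, 3) ∧ j.val = (2, 3)) ∨ (i.val = (3, 2) ∧ j.val = (3, 2)) then q1
    else 0

open Finset

lemma binaryForm_nonneg {a b c : ℝ} (ha : 0 < a) (hdisc : b ^ 2 < a * c) (t s : ℝ) :
    0 ≤ a * t ^ 2 + 2 * b * t * s + c * s ^ 2 := by
  nlinarith [sq_nonneg (a * t + b * s), mul_nonneg (sub_pos.2 hdisc).le (sq_nonneg s)]

lemma binaryForm_pos {a b c : ℝ} (ha : 0 < a) (hdisc : b ^ 2 < a * c) {t : ℝ} (ht : t ≠ 0)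
    (s : ℝ) : 0 < a * t ^ 2 + 2 * b * t * s + c * s ^ 2 := by
  rcases eq_or_ne s 0 with rfl | hs
  · simpa using mul_pos ha (sq_pos_of_ne_zero ht)
  · nlinarith [sq_nonneg (a * t + b * s), mul_pos (sub_pos.2 hdisc) (sq_pos_of_ne_zero hs)]

namespace Matrix

variable {n : Type*} {A : Matrix n n ℝ}

lemma PosDef.sq_apply_lt_mul_apply_self (hA : A.PosDef) {i j : n} (hij : i ≠ j) :
    A i j ^ 2 < A i i * A j j := by
  have hdet := (hA.submatrix (e := ![i, j]) fun a b => by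
    fin_cases a <;> fin_cases b <;> simp [hij, hij.symm]).det_pos
  have hsymm : A j i = A i j := by simpa using hA.isHermitian.apply i j
  simp only [det_fin_two, submatrix_apply, cons_val_zero, cons_val_one, hsymm] at hdet
  linarith

/-- A symmetric matrix whose off-diagonal entries vanish outside the graph of an involution `σ`
is block diagonal with blocks of size at most two. -/
lemma posDef_of_involutive_support [Fintype n] [DecidableEq n] (hA : A.IsHermitian)
    {σ : n → n} (hσ : Function.Involutive σ) (hsupp : ∀ i j, j ≠ i → j ≠ σ i → A i j = 0)
    (hdiag : ∀ i, 0 < A i i) (hdisc : ∀ i, σ i ≠ i → A i (σ i) ^ 2 < A i i * A (σ i) (σ i)) :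
    A.PosDef := by
  refine PosDef.of_dotProduct_mulVec_pos hA fun x hx => ?_
  set r : n → ℝ := fun i => ∑ j ∈ {i, σ i}, x i * A i j * x j with hr
  have hrows : star x ⬝ᵥ (A *ᵥ x) = ∑ i, r i := by
    simp only [star_trivial, dotProduct, mulVec, mul_sum, ← mul_assoc]
    refine sum_congr rfl fun i _ => (sum_subset (subset_univ _) fun j _ hj => ?_).symm
    simp only [mem_insert, mem_singleton, not_or] at hj
    rw [hsupp i j hj.1 hj.2, mul_zero, zero_mul]
  have hpair : ∀ i, 0 ≤ r i + r (σ i) ∧ (x i ≠ 0 → 0 < r i + r (σ i)) := by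
    intro i
    by_cases hfix : σ i = i
    · have hr_fix : r i + r (σ i) = 2 * A i i * x i ^ 2 := by
        simp only [hr, hfix, insert_eq_of_mem (mem_singleton_self i), sum_singleton]
        ring
      have hii := hdiag i
      rw [hr_fix]
      exact ⟨by positivity, fun hi => by positivity⟩
    · have hsymm : A (σ i) i = A i (σ i) := by simpa using hA.apply i (σ i)
      have hr_pair : r i + r (σ i) = A i i * x i ^ 2 + 2 * A i (σ i) * x i * x (σ i)
          + A (σ i) (σ i) * x (σ i) ^ 2 := by
        simp only [hr, hσ i, sum_pair (Ne.symm hfix), sum_pair hfix, hsymm]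
        ring
      rw [hr_pair]
      exact ⟨binaryForm_nonneg (hdiag i) (hdisc i hfix) _ _,
        fun hi => binaryForm_pos (hdiag i) (hdisc i hfix) hi _⟩
  have hsum : 2 * ∑ i, r i = ∑ i, (r i + r (σ i)) := by
    rw [sum_add_distrib, two_mul, hσ.bijective.sum_comp r]
  obtain ⟨i, hi⟩ := Function.ne_iff.1 hx
  have := sum_pos' (fun i _ => (hpair i).1) ⟨i, mem_univ _, (hpair i).2 hi⟩
  linarith

end Matrix

namespace EO4

def mk (v w : Fin 5) (h : (v : ℕ) ^ 2 + (w : ℕ) ^ 2 ≤ 16 := by decide) : EO4 :=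
  ⟨(v, w), h⟩

/-- The involution exchanging the modes that `filterEO4` couples. -/
def partner : Equiv.Perm EO4 :=
  Equiv.swap (mk 0 4) (mk 4 0) * Equiv.swap (mk 1 2) (mk 3 2) *
    Equiv.swap (mk 2 1) (mk 2 3) * Equiv.swap (mk 1 3) (mk 3 1)

lemma partner_involutive : Function.Involutive partner := by
  unfold Function.Involutive
  decide

lemma partner_cases {p : EO4} (hp : partner p ≠ p) :
    p = mk 0 4 ∧ partner p = mk 4 0 ∨ p = mk 4 0 ∧ partner p = mk 0 4 ∨
    p = mk 1 2 ∧ partner p = mk 3 2 ∨ p = mk 3 2 ∧ partner p = mk 1 2 ∨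
    p = mk 2 1 ∧ partner p = mk 2 3 ∨ p = mk 2 3 ∧ partner p = mk 2 1 ∨
    p = mk 1 3 ∧ partner p = mk 3 1 ∨ p = mk 3 1 ∧ partner p = mk 1 3 := by
  revert p
  decide

end EO4

lemma massEO4_apply_self (p : EO4) :
    massEO4 p p = 4 / (((2 * (p.val.1 : ℕ) + 1) * (2 * (p.val.2 : ℕ) + 1) : ℕ) : ℝ) :=
  Matrix.diagonal_apply_eq _ _

lemma massEO4_apply_of_ne {p p' : EO4} (h : p ≠ p') : massEO4 p p' = 0 :=
  Matrix.diagonal_apply_ne _ h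

lemma filterEO4_symm (q0 q1 q2 q3 : ℝ) (i j : EO4) :
    filterEO4 q0 q1 q2 q3 j i = filterEO4 q0 q1 q2 q3 i j := by
  simp only [filterEO4, and_comm, or_comm, or_left_comm]

lemma filterEO4_eq_zero (q0 q1 q2 q3 : ℝ) {i j : EO4} (hi : j ≠ i) (hp : j ≠ EO4.partner i) :
    filterEO4 q0 q1 q2 q3 i j = 0 := by
  obtain ⟨⟨a, b⟩, hab⟩ := i
  obtain ⟨⟨c, d⟩, hcd⟩ := j
  unfold filterEO4
  split_ifs <;> first
    | rfl
    | exfalso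
      rename_i h
      simp only [Prod.mk.injEq] at h
      casesm* _ ∨ _, _ ∧ _ <;> subst_vars <;> first | exact hi rfl | exact hp rfl

lemma isHermitian_massEO4_add_filterEO4 (q0 q1 q2 q3 : ℝ) :
    (massEO4 + filterEO4 q0 q1 q2 q3).IsHermitian :=
  (Matrix.isHermitian_diagonal _).add
    (Matrix.IsHermitian.ext fun i j => (star_trivial _).trans (filterEO4_symm _ _ _ _ i j))

/-- For the degree-4 Euclidean order basis, `M + Q` is positive definite iff the five
stated inequalities hold. -/
theorem stmt_7 (q0 q1 q2 q3 : ℝ) :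
    (massEO4 + filterEO4 q0 q1 q2 q3).PosDef ↔
      q0 > -4 / 9 ∧
      q2 > -4 / 25 ∧
      420 * q1 + 48 - 4375 * q2 ^ 2 > 0 ∧
      144 - 30625 * q2 ^ 2 > 0 ∧
      9 * q0 * (9 * q0 + 8) - 81 * q3 ^ 2 + 16 > 0 := by
  constructor
  · intro hA
    have h04 := hA.diag_pos (i := EO4.mk 0 4)
    have h22 := hA.diag_pos (i := EO4.mk 2 2)
    have h04_40 := hA.sq_apply_lt_mul_apply_self (i := EO4.mk 0 4) (j := EO4.mk 4 0) (by decide)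
    have h12_32 := hA.sq_apply_lt_mul_apply_self (i := EO4.mk 1 2) (j := EO4.mk 3 2) (by decide)
    have h13_31 := hA.sq_apply_lt_mul_apply_self (i := EO4.mk 1 3) (j := EO4.mk 3 1) (by decide)
    simp (disch := decide) only [Matrix.add_apply, massEO4_apply_self, massEO4_apply_of_ne]
      at h04 h22 h04_40 h12_32 h13_31
    simp +decide [filterEO4, EO4.mk] at h04 h22 h04_40 h12_32 h13_31
    refine ⟨by linarith, by linarith, by nlinarith, by nlinarith, by nlinarith⟩
  · rintro ⟨h1, h2, h3, h4, h5⟩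
    refine Matrix.posDef_of_involutive_support (isHermitian_massEO4_add_filterEO4 ..)
      EO4.partner_involutive (fun i j hi hp => ?_) (fun i => ?_) (fun i hi => ?_)
    · rw [Matrix.add_apply, massEO4_apply_of_ne hi.symm, filterEO4_eq_zero _ _ _ _ hi hp, add_zero]
    · rw [Matrix.add_apply, massEO4_apply_self]
      fin_cases i <;> simp +decide [filterEO4] <;> nlinarith [sq_nonneg q2]
    · simp only [Matrix.add_apply, massEO4_apply_self, massEO4_apply_of_ne hi.symm, zero_add]
      rcases EO4.partner_cases hi with ⟨rfl, hp⟩ | ⟨rfl, hp⟩ | ⟨rfl, hp⟩ | ⟨rfl, hp⟩ |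
        ⟨rfl, hp⟩ | ⟨rfl, hp⟩ | ⟨rfl, hp⟩ | ⟨rfl, hp⟩ <;>
        rw [hp] <;> simp +decide [filterEO4, EO4.mk] <;> nlinarith
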